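/- Let ℓ be a prime, m ∈ ℕ ∪ {∞}, and K a field. Let v_1, v_2 be two valuations of K, and assume there exists an element σ ∈ D_{v_1}^m ∩ D_{v_2}^m such that σ is not valuative. Then the valuations v_1 and v_2 are comparable. -/

import Mathlib

open Polynomial

noncomputable section

/-- The coefficient ring `Λ_m`: `ℤ/ℓ^m` for finite `m`, and `ℤ_ℓ` for `m = ∞`. -/
def Lam (ℓ : ℕ) [Fact ℓ.Prime] : ℕ∞ → Type
  | ⊤ => PadicInt ℓ
  | (m : ℕ) => ZMod (ℓ ^ m)

instance (ℓ : ℕ) [Fact ℓ.Prime] : (m : ℕ∞) → CommRing (Lam ℓ m)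
  | ⊤ => inferInstanceAs (CommRing (PadicInt ℓ))
  | (m : ℕ) => inferInstanceAs (CommRing (ZMod (ℓ ^ m)))

/-- The canonical projection `Λ_m → Λ_n` (for `n ≤ m`; junk value `0` otherwise). -/
def LamProj (ℓ : ℕ) [Fact ℓ.Prime] : (m n : ℕ∞) → Lam ℓ m →+ Lam ℓ n
  | ⊤, ⊤ => AddMonoidHom.id _
  | ⊤, (n : ℕ) => (PadicInt.toZModPow n).toAddMonoidHom
  | (m : ℕ), (n : ℕ) =>
      if h : ℓ ^ n ∣ ℓ ^ m then (ZMod.castHom h (ZMod (ℓ ^ n))).toAddMonoidHom else 0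
  | (_ : ℕ), ⊤ => 0

/-- The `ℓ^m`-minimized Galois group `𝔤^m(K) = Hom(Kˣ, Λ_m)`. -/
abbrev gal (ℓ : ℕ) [Fact ℓ.Prime] (m : ℕ∞) (K : Type*) [Field K] : Type _ :=
  Additive Kˣ →+ Lam ℓ m

variable {ℓ : ℕ} [Fact ℓ.Prime] {K : Type*} [Field K]

open scoped Classical

/-- Evaluation of `σ ∈ 𝔤^m(K)` at a unit of `K`. -/
def galu {m : ℕ∞} (σ : gal ℓ m K) (x : Kˣ) : Lam ℓ m :=
  σ (Additive.ofMul x)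

/-- Evaluation of `σ ∈ 𝔤^m(K)` at an arbitrary element of `K` (junk value `0` at `0`). -/
def galApp {m : ℕ∞} (σ : gal ℓ m K) (x : K) : Lam ℓ m :=
  if hx : x ≠ 0 then galu σ (Units.mk0 x hx) else 0

/-- Scalar multiplication of `𝔤^m(K)` by `Λ_m`. -/
def galSmul {m : ℕ∞} (a : Lam ℓ m) (σ : gal ℓ m K) : gal ℓ m K :=
  AddMonoidHom.mk' (fun x => a * σ x) (by intro x y; simp only [map_add, mul_add])

/-- The canonical map `𝔤^m(K) → 𝔤^n(K)`, `σ ↦ σ_n`. -/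
def galProj (m n : ℕ∞) (σ : gal ℓ m K) : gal ℓ n K :=
  (LamProj ℓ m n).comp σ

/-- `(σ,τ)` is a C-pair: `σ(x)·τ(1−x) = σ(1−x)·τ(x)` for all `x ∈ K ∖ {0,1}`. -/
def IsCPair {m : ℕ∞} (σ τ : gal ℓ m K) : Prop :=
  ∀ x : K, x ≠ 0 → x ≠ 1 →
    galApp σ x * galApp τ (1 - x) = galApp σ (1 - x) * galApp τ x

/-- A subset of `𝔤^m(K)` is a C-set if all pairs of its elements are C-pairs. -/
def IsCSet {m : ℕ∞} (S : Set (gal ℓ m K)) : Prop :=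
  ∀ σ ∈ S, ∀ τ ∈ S, IsCPair σ τ

/-- `μ_{c·ℓ^m} ⊂ K`: the polynomial `X^{c·ℓ^m} − 1` splits completely in `K`
(for all finite exponents when `m = ∞`). -/
def MuIn (K : Type*) [Field K] (c ℓ : ℕ) : ℕ∞ → Prop
  | ⊤ => ∀ k : ℕ, Polynomial.Splits ((Polynomial.X : Polynomial K) ^ (c * ℓ ^ k) - 1)
  | (N : ℕ) => Polynomial.Splits ((Polynomial.X : Polynomial K) ^ (c * ℓ ^ N) - 1)

/-- `M_r(n) = (r+1)·n − r`. -/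
def Mfun (r : ℕ) : ℕ∞ → ℕ∞
  | ⊤ => ⊤
  | (n : ℕ) => (((r + 1) * n - r : ℕ) : ℕ∞)

/-- `N(n) = M_1((6·ℓ^{3n−2} − 7)·(n−1) + 3n − 2)`. -/
def Nfun (ℓ : ℕ) : ℕ∞ → ℕ∞
  | ⊤ => ⊤
  | (n : ℕ) => Mfun 1 (((6 * ℓ ^ (3 * n - 2) - 7) * (n - 1) + 3 * n - 2 : ℕ) : ℕ∞)

/-- `R(n) = N(M_2(M_1(n)))`. -/
def Rfun (ℓ : ℕ) (n : ℕ∞) : ℕ∞ :=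
  Nfun ℓ (Mfun 2 (Mfun 1 n))

/-- The minimized inertia group `I_v^m` of a valuation (valuation subring) of `K`:
homomorphisms vanishing on the `v`-units. -/
def inertia (ℓ : ℕ) [Fact ℓ.Prime] (m : ℕ∞) (A : ValuationSubring K) : Set (gal ℓ m K) :=
  {σ | ∀ x : Kˣ, A.valuation (x : K) = 1 → galu σ x = 0}

/-- The minimized decomposition group `D_v^m` of a valuation (valuation subring) of `K`:
homomorphisms vanishing on the principal `v`-units `1 + 𝔪_v`. -/
def decomp (ℓ : ℕ) [Fact ℓ.Prime] (m : ℕ∞) (A : ValuationSubring K) : Set (gal ℓ m K) :=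
  {σ | ∀ x : Kˣ, A.valuation ((x : K) - 1) < 1 → galu σ x = 0}

/-- A subgroup of (the units of) a linearly ordered group-with-zero is convex. -/
def IsConvexSub {Γ : Type*} [LinearOrderedCommGroupWithZero Γ] (C : Subgroup Γˣ) : Prop :=
  ∀ γ c : Γˣ, (1 : Γ) ≤ (γ : Γ) → (γ : Γ) ≤ (c : Γ) → c ∈ C → γ ∈ C

/-- A subgroup is `ℓ`-divisible. -/
def IsLDivisible {Γ : Type*} [LinearOrderedCommGroupWithZero Γ] (ℓ : ℕ) (C : Subgroup Γˣ) :
    Prop :=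
  ∀ c ∈ C, ∃ d ∈ C, d ^ ℓ = c

/-- Condition (V1): the value group `vK` contains no nontrivial `ℓ`-divisible convex
subgroups. -/
def NoLDivConvex (ℓ : ℕ) (A : ValuationSubring K) : Prop :=
  ∀ C : Subgroup (A.ValueGroup)ˣ, IsConvexSub C → IsLDivisible ℓ C → C = ⊥

/-- The residue field `Kv` of a valuation. -/
abbrev resField (A : ValuationSubring K) : Type _ := IsLocalRing.ResidueField A

/-- `τ ∈ 𝔤^m(Kv)` is the element induced by `σ ∈ D_v^m` (i.e. `τ = σ_v`): for every
`v`-unit `x` one has `τ(x̄) = σ(x)`. -/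
def Induces {m : ℕ∞} (A : ValuationSubring K) (σ : gal ℓ m K)
    (τ : gal ℓ m (resField A)) : Prop :=
  ∀ (x : Kˣ) (h : A.valuation (x : K) = 1),
    galApp τ (IsLocalRing.residue A ⟨(x : K), (A.valuation_le_one_iff (x : K)).mp h.le⟩) =
      galu σ x

/-- An `m`-visible valuation. -/
def IsVisibleVal (ℓ : ℕ) [Fact ℓ.Prime] (m : ℕ∞) (A : ValuationSubring K) : Prop :=
  NoLDivConvex ℓ A ∧
  ¬ IsCSet (Set.univ : Set (gal ℓ m (resField A))) ∧
  ∀ B : ValuationSubring (resField A),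
    decomp ℓ m B = Set.univ → inertia ℓ m B = {0}

/-- `Σ^⊥ = ∩_{σ ∈ Σ} ker σ ⊆ Kˣ`. -/
def orth {m : ℕ∞} (S : Set (gal ℓ m K)) : Set Kˣ :=
  {x | ∀ σ ∈ S, galu σ x = 0}

/-- `σ` is valuative: `σ ∈ I_v^m` for some valuation `v` of `K`. -/
def IsValuative {m : ℕ∞} (σ : gal ℓ m K) : Prop :=
  ∃ A : ValuationSubring K, σ ∈ inertia ℓ m A

/-- `V = v_σ` is the coarsest valuation with `σ ∈ I_V^m`. -/
def IsVsigma {m : ℕ∞} (σ : gal ℓ m K) (V : ValuationSubring K) : Prop :=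
  σ ∈ inertia ℓ m V ∧ ∀ W : ValuationSubring K, σ ∈ inertia ℓ m W → W ≤ V

/-- `V = v_Σ` is the coarsest valuation with `Σ ⊆ I_V^m`. -/
def IsVSet {m : ℕ∞} (S : Set (gal ℓ m K)) (V : ValuationSubring K) : Prop :=
  S ⊆ inertia ℓ m V ∧ ∀ W : ValuationSubring K, S ⊆ inertia ℓ m W → W ≤ V

/-- The set `D^m_n(Σ)`. -/
def Dmn (n m : ℕ∞) (S : Set (gal ℓ n K)) : Set (gal ℓ n K) :=
  {τ | ∀ σ ∈ S, ∃ τ₁ τ₂ : gal ℓ n K, ∃ σ' τ' τ₁' τ₂' : gal ℓ m K,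
    galProj m n σ' = σ ∧ galProj m n τ' = τ ∧ galProj m n τ₁' = τ₁ ∧ galProj m n τ₂' = τ₂ ∧
    ¬ IsCPair τ₁ τ₂ ∧ IsCPair σ' τ' ∧ IsCPair σ' τ₁' ∧ IsCPair σ' τ₂'}

/-- The set `I^m_n(Σ)`. -/
def Imn (n m : ℕ∞) (S : Set (gal ℓ n K)) : Set (gal ℓ n K) :=
  {σ | σ ∈ S ∧ ∃ σ' : gal ℓ m K, galProj m n σ' = σ ∧
    ∀ τ ∈ S, ∃ τ' : gal ℓ m K, galProj m n τ' = τ ∧ IsCPair σ' τ'}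

/-- `K` is a function field over `k`, i.e. a finitely generated field extension. -/
def IsFunctionField (k K : Type*) [Field k] [Field K] [Algebra k K] : Prop :=
  ∃ s : Finset K, IntermediateField.adjoin k (s : Set K) = ⊤

/-- `trdeg(K|k) = d`. -/
def HasTrdeg (k K : Type*) [Field k] [Field K] [Algebra k K] (d : ℕ) : Prop :=
  ∃ b : Fin d → K, IsTranscendenceBasis k b


/-- The set `ℓ^n·𝔤^m(K)` (interpreted as the trivial subgroup when `n = ∞`). -/
def lPowSet (ℓ : ℕ) [Fact ℓ.Prime] (m : ℕ∞) (K : Type*) [Field K] : ℕ∞ → Set (gal ℓ m K)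
  | ⊤ => {0}
  | (k : ℕ) => {x | ∃ σ : gal ℓ m K, x = galSmul ((ℓ : Lam ℓ m) ^ k) σ}

end

/-! If `V₁` and `V₂` are incomparable, there is a "cross element" `x`, one with
`V₁.valuation x < 1 < V₂.valuation x`. Every cross element `s` is a principal `V₁`-unit divided by
a principal `V₂`-unit, namely `s = (1 + s) / (1 + s⁻¹)`. Induction over the ring generated by
`V₁ ∪ V₂` shows that the `V₂`-value of every element of the compositum `V₁ ⊔ V₂` is exceeded by
that of a cross element; consequently every unit `u` of `V₁ ⊔ V₂` is `u = (u s) / s` with `s` and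
`u s` cross elements. Hence `(V₁ ⊔ V₂)ˣ ⊆ U¹_{V₁} · U¹_{V₂}`, and `σ`, which kills both groups of
principal units, lies in the inertia group of `V₁ ⊔ V₂`. -/

theorem Subring.sup_eq_closure_union {R : Type*} [NonAssocRing R] (S T : Subring R) :
    S ⊔ T = Subring.closure ((S : Set R) ∪ T) := by
  rw [Subring.closure_union, Subring.closure_eq, Subring.closure_eq]

namespace ValuationSubring

variable {K : Type*} [Field K] {A B : ValuationSubring K}

def IsCrossElement (A B : ValuationSubring K) (s : K) : Prop :=
  A.valuation s < 1 ∧ 1 < B.valuation s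

namespace IsCrossElement

variable {s t : K}

theorem ne_zero (hs : IsCrossElement A B s) : s ≠ 0 := by
  rintro rfl
  simpa using hs.2

theorem mul (hs : IsCrossElement A B s) (ht : IsCrossElement A B t) :
    IsCrossElement A B (s * t) := by
  simp only [IsCrossElement, map_mul]
  exact ⟨mul_lt_one_of_lt_of_le hs.1 ht.1.le, one_lt_mul_of_lt_of_le' hs.2 ht.2.le⟩

theorem inv (hs : IsCrossElement A B s) : IsCrossElement B A s⁻¹ := by
  simp only [IsCrossElement, map_inv₀]
  exact ⟨inv_lt_one_of_one_lt₀ hs.2, one_lt_inv_iff₀.2 ⟨(A.valuation.pos_iff.2 hs.ne_zero), hs.1⟩⟩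

end IsCrossElement

theorem exists_isCrossElement (hAB : ¬A ≤ B) (hBA : ¬B ≤ A) : ∃ x, IsCrossElement A B x := by
  obtain ⟨a, haA, haB⟩ := SetLike.not_le_iff_exists.1 hAB
  obtain ⟨b, hbB, hbA⟩ := SetLike.not_le_iff_exists.1 hBA
  rw [← valuation_le_one_iff] at haA haB hbA hbB
  push Not at haB hbA
  refine ⟨a * b⁻¹, ?_, ?_⟩
  · rw [map_mul, map_inv₀]
    exact Right.mul_lt_one_of_le_of_lt haA (inv_lt_one_of_one_lt₀ hbA)
  · rw [map_mul, map_inv₀]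
    exact one_lt_mul_of_lt_of_le' haB
      ((one_le_inv₀ (B.valuation.pos_iff.2 (by rintro rfl; simp at hbA))).2 hbB)

theorem exists_isCrossElement_valuation_lt {x : K} (hx : IsCrossElement A B x) {u : K}
    (hu : u ∈ A ⊔ B) : ∃ s, IsCrossElement A B s ∧ B.valuation u < B.valuation s := by
  change u ∈ A.toSubring ⊔ B.toSubring at hu
  rw [Subring.sup_eq_closure_union] at hu
  induction hu using Subring.closure_induction with
  | mem u hu =>
    rcases hu with hu | hu
    · by_cases huB : B.valuation u ≤ 1
      · exact ⟨x, hx, huB.trans_lt hx.2⟩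
      · push Not at huB
        refine ⟨u * x, ⟨?_, ?_⟩, ?_⟩
        · rw [map_mul]
          exact Right.mul_lt_one_of_le_of_lt ((A.valuation_le_one_iff u).2 hu) hx.1
        · rw [map_mul]
          exact one_lt_mul_of_lt_of_le' huB hx.2.le
        · rw [map_mul]
          exact (lt_mul_iff_one_lt_right (zero_lt_one.trans huB)).2 hx.2
    · exact ⟨x, hx, ((B.valuation_le_one_iff u).2 hu).trans_lt hx.2⟩
  | zero => exact ⟨x, hx, by simpa using zero_lt_one.trans hx.2⟩
  | one => exact ⟨x, hx, by simpa using hx.2⟩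
  | add a b _ _ ha hb =>
    obtain ⟨sa, hsa, ha⟩ := ha
    obtain ⟨sb, hsb, hb⟩ := hb
    rcases le_total (B.valuation sa) (B.valuation sb) with h | h
    · exact ⟨sb, hsb, B.valuation.map_add_lt (ha.trans_le h) hb⟩
    · exact ⟨sa, hsa, B.valuation.map_add_lt ha (hb.trans_le h)⟩
  | neg a _ ha =>
    simpa only [Valuation.map_neg] using ha
  | mul a b _ _ ha hb =>
    obtain ⟨sa, hsa, ha⟩ := ha
    obtain ⟨sb, hsb, hb⟩ := hb
    refine ⟨sa * sb, hsa.mul hsb, ?_⟩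
    rw [map_mul, map_mul]
    exact mul_lt_mul'' ha hb zero_le zero_le

theorem IsCrossElement.mem_principalUnitGroup_sup {s : K} (hs : IsCrossElement A B s) :
    Units.mk0 s hs.ne_zero ∈ A.principalUnitGroup ⊔ B.principalUnitGroup := by
  have h₁ : A.valuation (1 + s) = 1 := A.valuation.map_one_add_of_lt hs.1
  have h₂ : B.valuation (1 + s⁻¹) = 1 := B.valuation.map_one_add_of_lt hs.inv.1
  have h₁₀ : 1 + s ≠ 0 := fun h => by simp [h] at h₁
  have h₂₀ : 1 + s⁻¹ ≠ 0 := fun h => by simp [h] at h₂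
  have hA : Units.mk0 (1 + s) h₁₀ ∈ A.principalUnitGroup := by
    simpa [mem_principalUnitGroup_iff] using hs.1
  have hB : Units.mk0 (1 + s⁻¹) h₂₀ ∈ B.principalUnitGroup := by
    simpa [mem_principalUnitGroup_iff] using hs.inv.1
  -- `s = (1 + s) / (1 + s⁻¹)`
  convert Subgroup.mul_mem_sup hA (inv_mem hB) using 1
  have := hs.ne_zero
  ext
  simp only [Units.val_mk0, Units.val_mul, Units.val_inv_eq_inv_val]
  field_simp
  rw [add_comm s, div_self h₁₀]

theorem unitGroup_sup_le {x : K} (hx : IsCrossElement A B x) :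
    (A ⊔ B).unitGroup ≤ A.principalUnitGroup ⊔ B.principalUnitGroup := by
  intro u hu
  have hu_mem : (u : K) ∈ A ⊔ B := mem_of_valuation_le_one _ _ hu.le
  have hu_inv_mem : (u : K)⁻¹ ∈ A ⊔ B := by
    simpa using mem_of_valuation_le_one _ _ (inv_mem hu).le
  obtain ⟨s₁, hs₁, hBs₁⟩ := exists_isCrossElement_valuation_lt hx hu_inv_mem
  obtain ⟨s₂, hs₂, hAs₂⟩ := exists_isCrossElement_valuation_lt hx.inv (sup_comm A B ▸ hu_mem)
  have hB : 1 < B.valuation (u * s₁) := by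
    rw [map_inv₀] at hBs₁
    rw [map_mul]
    exact (inv_lt_iff_one_lt_mul₀' (B.valuation.pos_iff.2 u.ne_zero)).1 hBs₁
  have hA : A.valuation (u * s₂⁻¹) < 1 := by
    rw [map_mul, map_inv₀]
    exact (mul_inv_lt_iff₀ (A.valuation.pos_iff.2 hs₂.ne_zero)).2 (by rwa [one_mul])
  have hs : IsCrossElement A B (s₁ * s₂⁻¹) := hs₁.mul hs₂.inv
  have hus : IsCrossElement A B (u * (s₁ * s₂⁻¹)) := by
    constructor
    · rw [show (u : K) * (s₁ * s₂⁻¹) = u * s₂⁻¹ * s₁ by ring, map_mul]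
      exact mul_lt_one_of_lt_of_le hA hs₁.1.le
    · rw [← mul_assoc, map_mul]
      exact one_lt_mul_of_lt_of_le' hB hs₂.inv.2.le
  -- `u = (u s) / s`, a quotient of two cross elements
  convert Subgroup.mul_mem _ hus.mem_principalUnitGroup_sup
    (inv_mem hs.mem_principalUnitGroup_sup) using 1
  have := hs₁.ne_zero
  have := hs₂.ne_zero
  ext
  simp only [Units.val_mk0, Units.val_mul, Units.val_inv_eq_inv_val]
  field_simp

end ValuationSubring

section GaloisKernel

variable {ℓ : ℕ} [Fact ℓ.Prime] {m : ℕ∞} {K : Type*} [Field K] {σ : gal ℓ m K}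
  {A : ValuationSubring K}

noncomputable def galKer (σ : gal ℓ m K) : Subgroup Kˣ := (MonoidHom.toAdditiveLeft.symm σ).ker

theorem mem_decomp_iff : σ ∈ decomp ℓ m A ↔ A.principalUnitGroup ≤ galKer σ := Iff.rfl

theorem mem_inertia_iff : σ ∈ inertia ℓ m A ↔ A.unitGroup ≤ galKer σ := Iff.rfl

end GaloisKernel

theorem stmt15_general (ℓ : ℕ) [Fact ℓ.Prime] (m : ℕ∞) (K : Type*) [Field K]
    (V₁ V₂ : ValuationSubring K) (σ : gal ℓ m K)
    (h₁ : σ ∈ decomp ℓ m V₁) (h₂ : σ ∈ decomp ℓ m V₂) (hnv : ¬ IsValuative σ) :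
    V₁ ≤ V₂ ∨ V₂ ≤ V₁ := by
  by_contra! h
  obtain ⟨x, hx⟩ := ValuationSubring.exists_isCrossElement h.1 h.2
  exact hnv ⟨V₁ ⊔ V₂, mem_inertia_iff.2 <| (ValuationSubring.unitGroup_sup_le hx).trans
    (sup_le (mem_decomp_iff.1 h₁) (mem_decomp_iff.1 h₂))⟩

/-- Two valuations sharing a non-valuative decomposition element are comparable. -/
theorem stmt15 (ℓ : ℕ) [Fact ℓ.Prime] (m : ℕ∞) (hm : 1 ≤ m) (K : Type*) [Field K]
    (V₁ V₂ : ValuationSubring K) (σ : gal ℓ m K)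
    (h₁ : σ ∈ decomp ℓ m V₁) (h₂ : σ ∈ decomp ℓ m V₂) (hnv : ¬ IsValuative σ) :
    V₁ ≤ V₂ ∨ V₂ ≤ V₁ :=
  stmt15_general ℓ m K V₁ V₂ σ h₁ h₂ hnv
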